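/- Let 𝓡 = 𝓡(ℝ,𝔽) with 𝔽 an algebraically closed field, and let A ∈ 𝓡̄^{n×n} be an ELT matrix. Then the following are equivalent: (i) the rows of A are linearly dependent; (ii) the columns of A are linearly dependent; (iii) A is singular, i.e. s(det A) = 0. -/

import Mathlib

/-- The ELT algebra `𝓡(F, L)` together with an adjoined `−∞` element:
`bot` represents `−∞`, and `elt a ℓ` represents the element `[ℓ]a`
with tangible value `a ∈ F` and layer `ℓ ∈ L`.  Thus `ELT F L` plays the
role of `𝓡̄ = 𝓡 ∪ {−∞}`. -/
inductive ELT (F : Type) (L : Type) : Type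
  | bot : ELT F L
  | elt : F → L → ELT F L

namespace ELT

variable {F : Type} {L : Type}

/-- The sorting map `s : 𝓡̄ → L`, with `s (−∞) = 0`. -/
def s [Zero L] : ELT F L → L
  | bot => 0
  | elt _ ℓ => ℓ

/-- The tangible value `t : 𝓡̄ → F ∪ {−∞}`, with `t (−∞) = −∞ = ⊥`. -/
def t : ELT F L → WithBot F
  | bot => ⊥
  | elt a _ => (a : WithBot F)

/-- `−∞` is the additive identity of `𝓡̄`, so we register it as the zero. -/
instance : Zero (ELT F L) := ⟨bot⟩

/-- The multiplicative identity `[1]0`. -/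
instance [Zero F] [One L] : One (ELT F L) := ⟨elt 0 1⟩

/-- Addition on `𝓡̄`: the element with larger tangible value wins, and layers
add in case of a tie; `−∞` is neutral. -/
instance [LinearOrder F] [Add L] : Add (ELT F L) where
  add x y :=
    match x, y with
    | bot, y => y
    | x, bot => x
    | elt a ℓ, elt b k => if a < b then elt b k else if b < a then elt a ℓ else elt a (ℓ + k)

/-- Multiplication on `𝓡̄`: tangible values add, layers multiply; `−∞` is absorbing. -/
instance [Add F] [Mul L] : Mul (ELT F L) where
  mul x y :=
    match x, y with
    | bot, _ => bot
    | _, bot => bot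
    | elt a ℓ, elt b k => elt (a + b) (ℓ * k)

/-- The surpassing relation `x ⊨ y` on `𝓡̄`: `x = y + z` for some zero-layered `z`. -/
def Surpass [LinearOrder F] [Add L] [Zero L] (x y : ELT F L) : Prop :=
  ∃ z : ELT F L, s z = 0 ∧ x = y + z

/-- `x ∈ 𝓡^× ∪ {−∞}`: either `x = −∞` or `x` has nonzero layer. -/
def TangibleOrBot [Zero L] (x : ELT F L) : Prop :=
  x = bot ∨ s x ≠ 0

/-- The sum of a finite family of elements of `𝓡̄`. -/
def fsum [LinearOrder F] [Add L] {m : ℕ} (f : Fin m → ELT F L) : ELT F L :=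
  (List.ofFn f).sum

/-- A finite family of vectors in `𝓡̄ⁿ` is linearly dependent if there are
coefficients in `𝓡^× ∪ {−∞}`, not all `−∞`, such that the corresponding linear
combination is zero-layered in every coordinate (equivalently, some subfamily
admits a combination with all coefficients in `𝓡^×` which is zero-layered
everywhere). -/
def LinDep [LinearOrder F] [Zero L] [Add L] [Add F] [Mul L] {m n : ℕ}
    (v : Fin m → Fin n → ELT F L) : Prop :=
  ∃ a : Fin m → ELT F L, (∀ i, TangibleOrBot (a i)) ∧ (∃ i, a i ≠ bot) ∧
    ∀ j : Fin n, s (fsum fun i => a i * v i j) = 0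

/-- The ELT determinant of a square ELT matrix. -/
noncomputable def det {n : ℕ} [LinearOrder F] [Add F] [Zero F] [Ring L]
    (A : Matrix (Fin n) (Fin n) (ELT F L)) : ELT F L :=
  ((Finset.univ : Finset (Equiv.Perm (Fin n))).toList.map fun σ =>
    elt 0 (((Equiv.Perm.sign σ : ℤˣ) : ℤ) : L) * (List.ofFn fun i => A i (σ i)).prod).sum

/-- The EL tropicalization of a Hahn (generalized Puiseux) series: `0 ↦ −∞`,
and a nonzero series with leading monomial `ℓ tᵃ` goes to `[ℓ](−a)`. -/
noncomputable def ELTrop [AddCommGroup F] [LinearOrder F] [IsOrderedAddMonoid F] [Zero L] (x : HahnSeries F L) : ELT F L :=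
  open scoped Classical in
  if x = 0 then bot else elt (-x.order) (x.coeff x.order)

end ELT

/-!
Lift the entries of an ELT matrix to Hahn series `𝔽⟦ℝ⟧`: `h` lifts `[ℓ]b` when it is
`ℓ t^(-b)` plus terms of higher order. Lifting is compatible with sums and products, hence with
determinants; an ELT dependence lifts to an exact one, and tropicalizing an exact kernel vector
gives back an ELT dependence. So dependence of the rows (or of the columns) and singularity of `A`
all amount to `A` having a lift with vanishing determinant.

For singular `A`, suppose no lift has vanishing determinant. The determinant is affine in each
entry, so changing one entry of a lift cannot change the order of its determinant, since otherwise
the entry could be readjusted to kill it; hence all lifts have determinants of the same order. But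
if `det A = [0]r`, the monomial lift has determinant of order `> -r`, while perturbing by small
monomials the entries along a permutation attaining `r` gives a lift whose determinant has order
arbitrarily close to `-r`.
-/

open scoped HahnSeries

namespace HahnSeries

variable {Γ R : Type*} [AddCommMonoid Γ] [LinearOrder Γ] [IsOrderedCancelAddMonoid Γ]

section Semiring

variable [NonUnitalNonAssocSemiring R] {x y : R⟦Γ⟧} {a b : Γ}

private lemma le_of_mem_antidiagonal (hx : ∀ q < a, x.coeff q = 0) (hy : ∀ q < b, y.coeff q = 0)
    {c : Γ} {p : Γ × Γ} (hp : p ∈ Finset.antidiagonal x.isPWO_support y.isPWO_support c) :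
    a ≤ p.1 ∧ b ≤ p.2 := by
  rw [Finset.mem_antidiagonal] at hp
  exact ⟨not_lt.1 fun h => hp.1 (hx _ h), not_lt.1 fun h => hp.2.1 (hy _ h)⟩

lemma coeff_mul_add_of_forall_lt (hx : ∀ q < a, x.coeff q = 0) (hy : ∀ q < b, y.coeff q = 0) :
    (x * y).coeff (a + b) = x.coeff a * y.coeff b := by
  rw [coeff_mul, Finset.sum_eq_single (a, b)]
  · intro p hp hne
    obtain ⟨ha, hb⟩ := le_of_mem_antidiagonal hx hy hp
    have hsum := (Finset.mem_antidiagonal.1 hp).2.2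
    rcases ha.lt_or_eq with ha | ha
    · exact absurd hsum (add_lt_add_of_lt_of_le ha hb).ne'
    rcases hb.lt_or_eq with hb | hb
    · exact absurd hsum (add_lt_add_of_le_of_lt ha.le hb).ne'
    exact absurd (Prod.ext ha.symm hb.symm) hne
  · intro h
    by_contra hne
    exact h (Finset.mem_antidiagonal.2 ⟨left_ne_zero_of_mul hne, right_ne_zero_of_mul hne, rfl⟩)

lemma coeff_mul_eq_zero_of_lt_add (hx : ∀ q < a, x.coeff q = 0) (hy : ∀ q < b, y.coeff q = 0)
    {c : Γ} (hc : c < a + b) : (x * y).coeff c = 0 := by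
  rw [coeff_mul]
  refine Finset.sum_eq_zero fun p hp => absurd (Finset.mem_antidiagonal.1 hp).2.2 ?_
  obtain ⟨ha, hb⟩ := le_of_mem_antidiagonal hx hy hp
  exact (hc.trans_le (add_le_add ha hb)).ne'

end Semiring

lemma prod_single [CommSemiring R] {ι : Type*} (s : Finset ι) (a : ι → Γ) (r : ι → R) :
    ∏ i ∈ s, single (a i) (r i) = single (∑ i ∈ s, a i) (∏ i ∈ s, r i) := by
  classical
  induction s using Finset.induction_on with
  | empty => simp
  | insert i s hi ih => rw [Finset.prod_insert hi, ih, single_mul_single, Finset.sum_insert hi,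
      Finset.prod_insert hi]

end HahnSeries

namespace Matrix

variable {n R G : Type*} [Fintype n] [DecidableEq n] [CommRing R]

theorem det_eq_add_mul_adjugate_of_forall_ne {M M' : Matrix n n R} {i j : n}
    (h : ∀ i' j', (i', j') ≠ (i, j) → M' i' j' = M i' j') :
    M'.det = M.det + (M' i j - M i j) * M.adjugate j i := by
  set d := M' i j - M i j with hd
  have hrow : M' = M.updateRow i (M i + d • Pi.single j 1) := by
    ext i' j'
    rcases eq_or_ne i' i with rfl | hi
    · rcases eq_or_ne j' j with rfl | hj
      · simp [hd]
      · simp [hj, h i' j' (by simp [hj])]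
    · simp [hi, h i' j' (by simp [hi])]
  rw [hrow, det_updateRow_add, updateRow_eq_self, det_updateRow_smul, adjugate_apply]

/-- Writing `Y i = (M i + Y i) - M i` and expanding multilinearly, `det Y` is a signed sum of the
determinants on the right-hand side. -/
theorem exists_finset_map_det_add_rows_ne_zero [AddCommGroup G] (φ : R →+ G) (M Y : Matrix n n R)
    (hY : φ Y.det ≠ 0) :
    ∃ T : Finset n, φ (of fun i => if i ∈ T then M i + Y i else M i).det ≠ 0 := by
  suffices key : ∀ S T : Finset n,
      φ (of fun i => if i ∈ S then Y i else if i ∈ T then M i + Y i else M i).det ≠ 0 →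
      ∃ T : Finset n, φ (of fun i => if i ∈ T then M i + Y i else M i).det ≠ 0 by
    exact key Finset.univ ∅ (by simp only [Finset.mem_univ, if_true]; exact hY)
  intro S
  induction S using Finset.induction_on with
  | empty => exact fun T hT => ⟨T, by simpa using hT⟩
  | insert k S hk ih =>
    intro T hT
    set N := of fun i => if i ∈ insert k S then Y i else if i ∈ T then M i + Y i else M i
    have hadd : N.updateRow k (M k + Y k) =
        of fun i => if i ∈ S then Y i else if i ∈ insert k T then M i + Y i else M i := by
      ext i j; by_cases hi : i = k <;> simp [N, hi, hk]
    have hM : N.updateRow k (M k) =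
        of fun i => if i ∈ S then Y i else if i ∈ T.erase k then M i + Y i else M i := by
      ext i j; by_cases hi : i = k <;> simp [N, hi, hk]
    have hsplit : (N.updateRow k (M k + Y k)).det = (N.updateRow k (M k)).det + N.det := by
      rw [det_updateRow_add, show Y k = N k from (if_pos (Finset.mem_insert_self k S)).symm,
        updateRow_eq_self]
    have hne : φ (N.updateRow k (M k + Y k)).det ≠ 0 ∨ φ (N.updateRow k (M k)).det ≠ 0 := by
      by_contra! h
      rw [hsplit, map_add, h.2, zero_add] at h
      exact hT h.1
    rw [hadd, hM] at hne
    exact hne.elim (ih _) (ih _)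

end Matrix

namespace ELT

section Arithmetic

variable {F L : Type}

@[simp] lemma t_bot : t (bot : ELT F L) = ⊥ := rfl

@[simp] lemma t_elt (a : F) (ℓ : L) : t (elt a ℓ) = a := rfl

lemma eq_elt_of_t_eq {x : ELT F L} {a : F} (h : t x = a) : ∃ ℓ, x = elt a ℓ := by
  cases x with
  | bot => exact absurd h WithBot.bot_ne_coe
  | elt b ℓ => exact ⟨ℓ, by rw [WithBot.coe_inj.1 h]⟩

variable [LinearOrder F] [Add L]

@[simp] lemma bot_add (x : ELT F L) : bot + x = x := by cases x <;> rfl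

@[simp] lemma add_bot (x : ELT F L) : x + bot = x := by cases x <;> rfl

lemma elt_add_elt (a b : F) (ℓ k : L) : elt a ℓ + elt b k =
    if a < b then elt b k else if b < a then elt a ℓ else elt a (ℓ + k) := rfl

@[simp] lemma elt_add_elt_self (a : F) (ℓ k : L) : elt a ℓ + elt a k = elt a (ℓ + k) := by
  simp [elt_add_elt]

lemma t_add (x y : ELT F L) : t (x + y) = max (t x) (t y) := by
  cases x with
  | bot => simp
  | elt a ℓ =>
    cases y with
    | bot => simp
    | elt b k =>
      rcases lt_trichotomy a b with h | rfl | h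
      · simp [elt_add_elt, h, h.le]
      · simp
      · simp [elt_add_elt, h, h.not_gt, h.le]

lemma exists_mem_t_sum_eq (l : List (ELT F L)) (h : l.sum ≠ bot) : ∃ x ∈ l, t l.sum = t x := by
  induction l with
  | nil => exact absurd rfl h
  | cons x l ih =>
    rw [List.sum_cons, t_add]
    rcases le_or_gt (t l.sum) (t x) with hle | hlt
    · exact ⟨x, List.mem_cons_self, max_eq_left hle⟩
    · obtain ⟨y, hy, hty⟩ := ih fun hl => by simp [hl] at hlt
      exact ⟨y, List.mem_cons_of_mem x hy, (max_eq_right hlt.le).trans hty⟩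

lemma exists_t_fsum_eq {m : ℕ} (f : Fin m → ELT F L) (h : fsum f ≠ bot) :
    ∃ i, t (fsum f) = t (f i) := by
  obtain ⟨x, hx, htx⟩ := exists_mem_t_sum_eq _ h
  obtain ⟨i, rfl⟩ := List.mem_ofFn.1 hx
  exact ⟨i, htx⟩

end Arithmetic

section Multiplication

variable {F L : Type} [Add F] [Mul L]

@[simp] lemma bot_mul (x : ELT F L) : bot * x = bot := rfl

@[simp] lemma mul_bot (x : ELT F L) : x * bot = bot := by cases x <;> rfl

@[simp] lemma elt_mul_elt (a b : F) (ℓ k : L) : elt a ℓ * elt b k = elt (a + b) (ℓ * k) := rfl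

lemma t_mul (x y : ELT F L) : t (x * y) = t x + t y := by
  cases x <;> cases y <;> simp [← WithBot.coe_add]

end Multiplication

lemma t_prod {F L : Type} [AddMonoid F] [Mul L] [One L] (l : List (ELT F L)) :
    t l.prod = (l.map t).sum := by
  induction l with
  | nil => rfl
  | cons x l ih => rw [List.prod_cons, t_mul, ih, List.map_cons, List.sum_cons]

open HahnSeries
open scoped Matrix

section Lift

variable {𝔽 : Type} [CommRing 𝔽]

/-- The layer `ℓ` may be `0`: the lifts of `[0]b` are the series of order `> -b`, and `0`. -/
def IsLift : ELT ℝ 𝔽 → 𝔽⟦ℝ⟧ → Prop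
  | bot, h => h = 0
  | elt b ℓ, h => h.coeff (-b) = ℓ ∧ ∀ q < -b, h.coeff q = 0

noncomputable def monomialLift : ELT ℝ 𝔽 → 𝔽⟦ℝ⟧
  | bot => 0
  | elt b ℓ => single (-b) ℓ

def HasSingularLift {n : ℕ} (A : Matrix (Fin n) (Fin n) (ELT ℝ 𝔽)) : Prop :=
  ∃ H : Matrix (Fin n) (Fin n) 𝔽⟦ℝ⟧, (∀ i j, IsLift (A i j) (H i j)) ∧ H.det = 0

lemma IsLift.s_eq_zero {x : ELT ℝ 𝔽} (h : IsLift x 0) : s x = 0 := by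
  cases x with
  | bot => rfl
  | elt b ℓ => exact h.1.symm

lemma isLift_monomialLift (x : ELT ℝ 𝔽) : IsLift x (monomialLift x) := by
  cases x with
  | bot => rfl
  | elt b ℓ => exact ⟨coeff_single_same _ _, fun q hq => coeff_single_of_ne hq.ne⟩

lemma monomialLift_eq_zero_iff {x : ELT ℝ 𝔽} : monomialLift x = 0 ↔ s x = 0 := by
  cases x with
  | bot => simp [monomialLift, s]
  | elt b ℓ => simp [monomialLift, s]

lemma isLift_ELTrop (h : 𝔽⟦ℝ⟧) : IsLift (ELTrop h) h := by
  rw [ELTrop]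
  split_ifs with h0
  · exact h0
  · refine ⟨by rw [neg_neg], fun q hq => coeff_eq_zero_of_lt_order ?_⟩
    rwa [neg_neg] at hq

lemma isLift_elt_zero_iff {b : ℝ} {h : 𝔽⟦ℝ⟧} :
    IsLift (elt b 0) h ↔ ((-b : ℝ) : WithTop ℝ) < h.orderTop := by
  refine ⟨fun hl => ?_, fun hl => ⟨coeff_eq_zero_of_lt_orderTop hl,
    fun q hq => coeff_eq_zero_of_lt_orderTop ((WithTop.coe_lt_coe.2 hq).trans hl)⟩⟩
  refine lt_of_le_of_ne ?_ fun he => orderTop_ne_of_coeff_eq_zero hl.1 he.symm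
  exact le_orderTop_iff_forall.2 fun q hq => hl.2 q (WithTop.coe_lt_coe.1 hq)

lemma IsLift.add {x y : ELT ℝ 𝔽} {h g : 𝔽⟦ℝ⟧} (hx : IsLift x h) (hy : IsLift y g) :
    IsLift (x + y) (h + g) := by
  cases x with
  | bot => rw [IsLift] at hx; simpa [hx] using hy
  | elt a ℓ =>
  cases y with
  | bot => rw [IsLift] at hy; simpa [hy] using hx
  | elt c k =>
  obtain ⟨hxa, hxlt⟩ := hx
  obtain ⟨hyc, hylt⟩ := hy
  rcases lt_trichotomy a c with hac | rfl | hca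
  · rw [elt_add_elt, if_pos hac]
    refine ⟨?_, fun q hq => ?_⟩
    · rw [coeff_add, hyc, hxlt _ (by linarith), zero_add]
    · rw [coeff_add, hylt _ hq, hxlt _ (by linarith), zero_add]
  · rw [elt_add_elt_self]
    refine ⟨by rw [coeff_add, hxa, hyc], fun q hq => ?_⟩
    rw [coeff_add, hxlt _ hq, hylt _ hq, add_zero]
  · rw [elt_add_elt, if_neg hca.not_gt, if_pos hca]
    refine ⟨?_, fun q hq => ?_⟩
    · rw [coeff_add, hxa, hylt _ (by linarith), add_zero]
    · rw [coeff_add, hxlt _ hq, hylt _ (by linarith), add_zero]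

lemma IsLift.add_of_lt_orderTop {b : ℝ} {ℓ : 𝔽} {h e : 𝔽⟦ℝ⟧} (hl : IsLift (elt b ℓ) h)
    (he : ((-b : ℝ) : WithTop ℝ) < e.orderTop) : IsLift (elt b ℓ) (h + e) := by
  simpa using hl.add (isLift_elt_zero_iff.2 he)

lemma IsLift.sub {b : ℝ} {ℓ : 𝔽} {h h' : 𝔽⟦ℝ⟧} (hl : IsLift (elt b ℓ) h)
    (hl' : IsLift (elt b ℓ) h') : IsLift (elt b 0) (h' - h) :=
  ⟨by rw [coeff_sub, hl.1, hl'.1, sub_self],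
    fun q hq => by rw [coeff_sub, hl.2 q hq, hl'.2 q hq, sub_self]⟩

lemma IsLift.mul {x y : ELT ℝ 𝔽} {h g : 𝔽⟦ℝ⟧} (hx : IsLift x h) (hy : IsLift y g) :
    IsLift (x * y) (h * g) := by
  cases x with
  | bot => rw [IsLift] at hx; simp [hx, IsLift]
  | elt a ℓ =>
  cases y with
  | bot => rw [IsLift] at hy; simp [hy, IsLift]
  | elt c k =>
  refine ⟨?_, fun q hq => coeff_mul_eq_zero_of_lt_add hx.2 hy.2 (by linarith)⟩
  rw [neg_add, coeff_mul_add_of_forall_lt hx.2 hy.2, hx.1, hy.1]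

lemma IsLift.list_sum {ι : Type*} (l : List ι) {f : ι → ELT ℝ 𝔽} {g : ι → 𝔽⟦ℝ⟧}
    (h : ∀ i ∈ l, IsLift (f i) (g i)) : IsLift (l.map f).sum (l.map g).sum := by
  induction l with
  | nil => rfl
  | cons i l ih =>
    simp only [List.map_cons, List.sum_cons]
    exact (h i List.mem_cons_self).add (ih fun j hj => h j (List.mem_cons_of_mem i hj))

lemma IsLift.list_prod {ι : Type*} (l : List ι) {f : ι → ELT ℝ 𝔽} {g : ι → 𝔽⟦ℝ⟧}
    (h : ∀ i ∈ l, IsLift (f i) (g i)) : IsLift (l.map f).prod (l.map g).prod := by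
  induction l with
  | nil =>
    refine ⟨by simp, fun q hq => ?_⟩
    rw [neg_zero] at hq
    simp [coeff_one, hq.ne]
  | cons i l ih =>
    simp only [List.map_cons, List.prod_cons]
    exact (h i List.mem_cons_self).mul (ih fun j hj => h j (List.mem_cons_of_mem i hj))

lemma IsLift.fsum {m : ℕ} {f : Fin m → ELT ℝ 𝔽} {g : Fin m → 𝔽⟦ℝ⟧}
    (h : ∀ i, IsLift (f i) (g i)) : IsLift (fsum f) (∑ i, g i) := by
  rw [ELT.fsum, ← List.sum_ofFn, List.ofFn_eq_map, List.ofFn_eq_map]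
  exact IsLift.list_sum _ fun i _ => h i

lemma IsLift.det {n : ℕ} {A : Matrix (Fin n) (Fin n) (ELT ℝ 𝔽)}
    {H : Matrix (Fin n) (Fin n) 𝔽⟦ℝ⟧} (h : ∀ i j, IsLift (A i j) (H i j)) :
    IsLift (ELT.det A) H.det := by
  rw [ELT.det, ← Matrix.det_transpose, Matrix.det_apply', ← Finset.sum_map_toList]
  refine IsLift.list_sum _ fun σ _ => IsLift.mul ?_ ?_
  · have := isLift_monomialLift (elt 0 (((Equiv.Perm.sign σ : ℤˣ) : ℤ) : 𝔽))
    rwa [monomialLift, neg_zero, single_zero_intCast] at this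
  · rw [← List.prod_ofFn, List.ofFn_eq_map, List.ofFn_eq_map]
    exact IsLift.list_prod _ fun i _ => h i (σ i)

end Lift

variable {𝔽 : Type} [Field 𝔽]

lemma linDep_of_isLift_vecMul_eq_zero {m n : ℕ} {V : Fin m → Fin n → ELT ℝ 𝔽}
    {H : Matrix (Fin m) (Fin n) 𝔽⟦ℝ⟧} (hH : ∀ i j, IsLift (V i j) (H i j))
    {u : Fin m → 𝔽⟦ℝ⟧} (hu : u ≠ 0) (hker : u ᵥ* H = 0) : LinDep V := by
  refine ⟨fun i => ELTrop (u i), fun i => ?_, ?_, fun j => ?_⟩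
  · by_cases h : u i = 0
    · exact Or.inl (by simp [ELTrop, h])
    · exact Or.inr (by simp [ELTrop, h, s])
  · obtain ⟨i, hi⟩ := Function.ne_iff.1 hu
    exact ⟨i, by simpa [ELTrop] using hi⟩
  · have hj : ∑ i, u i * H i j = 0 := congrFun hker j
    refine IsLift.s_eq_zero ?_
    rw [← hj]
    exact IsLift.fsum fun i => (isLift_ELTrop (u i)).mul (hH i j)

/-- Only the lift of `v i₀` needs correcting, for a summand `a i₀ * v i₀` of maximal tangible
value. -/
lemma exists_isLift_sum_mul_eq_zero {m : ℕ} {a : Fin m → ELT ℝ 𝔽}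
    (ha : ∀ i, TangibleOrBot (a i)) {v : Fin m → ELT ℝ 𝔽} (hs : s (fsum fun i => a i * v i) = 0) :
    ∃ h : Fin m → 𝔽⟦ℝ⟧, (∀ i, IsLift (v i) (h i)) ∧ ∑ i, monomialLift (a i) * h i = 0 := by
  set S := ∑ i, monomialLift (a i) * monomialLift (v i)
  have hS : IsLift (fsum fun i => a i * v i) S :=
    IsLift.fsum fun i => (isLift_monomialLift _).mul (isLift_monomialLift _)
  cases hsum : fsum fun i => a i * v i with
  | bot =>
    rw [hsum] at hS
    exact ⟨fun i => monomialLift (v i), fun i => isLift_monomialLift _, hS⟩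
  | elt w μ =>
    obtain ⟨i₀, hi₀⟩ := exists_t_fsum_eq (fun i => a i * v i) (by simp [hsum])
    rw [hsum, t_mul] at hi₀
    cases hai : a i₀ with
    | bot => simp [hai] at hi₀
    | elt c k =>
    cases hvi : v i₀ with
    | bot => simp [hvi] at hi₀
    | elt b ℓ =>
    have hw : w = c + b := by simpa [hai, hvi, ← WithBot.coe_add] using hi₀
    have hk : k ≠ 0 := by simpa [hai, s, TangibleOrBot] using ha i₀
    have hμ : μ = 0 := by simpa [hsum, s] using hs
    rw [hsum, hμ] at hS
    set e := -(single c k⁻¹ * S)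
    set δ : Fin m → 𝔽⟦ℝ⟧ := Pi.single i₀ e
    refine ⟨fun i => monomialLift (v i) + δ i, fun i => ?_, ?_⟩
    · rcases eq_or_ne i i₀ with rfl | hne
      · have := (isLift_monomialLift (elt b ℓ)).add
          ((isLift_monomialLift (elt (-c) (-k⁻¹))).mul hS)
        simpa [δ, hvi, hw, monomialLift] using this
      · simpa [δ, hne] using isLift_monomialLift (v i)
    · calc ∑ i, monomialLift (a i) * (monomialLift (v i) + δ i)
          = S + monomialLift (a i₀) * e := by
            simp only [mul_add, Finset.sum_add_distrib, δ, Pi.single_apply, mul_ite, mul_zero,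
              Finset.sum_ite_eq', Finset.mem_univ, if_true, S]
        _ = 0 := by
            rw [hai, monomialLift, mul_neg, ← mul_assoc, single_mul_single, neg_add_cancel,
              mul_inv_cancel₀ hk, single_zero_one, one_mul, add_neg_cancel]

lemma LinDep.exists_isLift_vecMul_eq_zero {m n : ℕ} {V : Fin m → Fin n → ELT ℝ 𝔽}
    (hV : LinDep V) : ∃ H : Matrix (Fin m) (Fin n) 𝔽⟦ℝ⟧, (∀ i j, IsLift (V i j) (H i j)) ∧
      ∃ u ≠ 0, u ᵥ* H = 0 := by
  obtain ⟨a, ha, ⟨i₁, hi₁⟩, hs⟩ := hV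
  choose h hlift hsum using fun j => exists_isLift_sum_mul_eq_zero ha (hs j)
  refine ⟨Matrix.of fun i j => h j i, fun i j => hlift j i, fun i => monomialLift (a i), ?_,
    funext hsum⟩
  refine Function.ne_iff.2 ⟨i₁, ?_⟩
  rw [Pi.zero_apply, Ne, monomialLift_eq_zero_iff]
  exact (ha i₁).resolve_left hi₁

lemma linDep_iff_hasSingularLift {n : ℕ} (A : Matrix (Fin n) (Fin n) (ELT ℝ 𝔽)) :
    LinDep A ↔ HasSingularLift A := by
  constructor
  · intro hA
    obtain ⟨H, hH, u, hu, hker⟩ := hA.exists_isLift_vecMul_eq_zero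
    exact ⟨H, hH, Matrix.exists_vecMul_eq_zero_iff.1 ⟨u, hu, hker⟩⟩
  · rintro ⟨H, hH, hdet⟩
    obtain ⟨u, hu, hker⟩ := Matrix.exists_vecMul_eq_zero_iff.2 hdet
    exact linDep_of_isLift_vecMul_eq_zero hH hu hker

lemma HasSingularLift.s_det_eq_zero {n : ℕ} {A : Matrix (Fin n) (Fin n) (ELT ℝ 𝔽)}
    (hA : HasSingularLift A) : s (det A) = 0 := by
  obtain ⟨H, hH, hdet⟩ := hA
  exact (hdet ▸ IsLift.det hH).s_eq_zero

lemma HasSingularLift.transpose {n : ℕ} {A : Matrix (Fin n) (Fin n) (ELT ℝ 𝔽)}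
    (hA : HasSingularLift A) : HasSingularLift Aᵀ := by
  obtain ⟨H, hH, hdet⟩ := hA
  exact ⟨Hᵀ, fun i j => hH j i, by rw [Matrix.det_transpose, hdet]⟩

lemma hasSingularLift_transpose_iff {n : ℕ} {A : Matrix (Fin n) (Fin n) (ELT ℝ 𝔽)} :
    HasSingularLift Aᵀ ↔ HasSingularLift A :=
  ⟨HasSingularLift.transpose, HasSingularLift.transpose⟩

/-- Solve `det L + (x - L i j) * c = 0` for the entry `x`, where `c` is the cofactor. -/
lemma hasSingularLift_of_orderTop_det_le {n : ℕ} {A : Matrix (Fin n) (Fin n) (ELT ℝ 𝔽)}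
    {L : Matrix (Fin n) (Fin n) 𝔽⟦ℝ⟧} (hL : ∀ i j, IsLift (A i j) (L i j)) {i j : Fin n}
    {b : ℝ} {ℓ : 𝔽} (hAij : A i j = elt b ℓ) {Δ : 𝔽⟦ℝ⟧}
    (hΔ : ((-b : ℝ) : WithTop ℝ) < Δ.orderTop)
    (hle : (Δ * L.adjugate j i).orderTop ≤ L.det.orderTop) : HasSingularLift A := by
  set c := L.adjugate j i
  set y := L.det * c⁻¹
  have hyc : y * c = L.det := by
    by_cases hc : c = 0
    · simpa [hc, eq_comm] using hle
    · exact inv_mul_cancel_right₀ hc _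
  have hy : ((-b : ℝ) : WithTop ℝ) < (-y).orderTop := by
    refine hΔ.trans_le ?_
    rw [orderTop_neg]
    by_cases hc : c = 0
    · simp [y, hc]
    rw [← hyc, orderTop_mul, orderTop_mul] at hle
    exact (WithTop.add_le_add_iff_right (orderTop_ne_top.2 hc)).1 hle
  set M := L.updateRow i (Function.update (L i) j (L i j + -y))
  have hMoff : ∀ i' j', (i', j') ≠ (i, j) → M i' j' = L i' j' := by
    intro i' j' hne
    by_cases hi : i' = i
    · subst hi
      simp [M, Function.update_of_ne (show j' ≠ j by simpa using hne)]
    · simp [M, hi]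
  refine ⟨M, fun i' j' => ?_, ?_⟩
  · by_cases hij : (i', j') = (i, j)
    · obtain ⟨rfl, rfl⟩ := Prod.ext_iff.1 hij
      have hLij := hL i' j'
      rw [hAij] at hLij
      simpa [M, hAij] using hLij.add_of_lt_orderTop hy
    · exact hMoff i' j' hij ▸ hL i' j'
  · rw [Matrix.det_eq_add_mul_adjugate_of_forall_ne hMoff]
    have hMij : M i j = L i j + -y := by simp [M]
    rw [hMij, add_sub_cancel_left, neg_mul, hyc, add_neg_cancel]

lemma orderTop_det_eq_of_eq_off {n : ℕ} {A : Matrix (Fin n) (Fin n) (ELT ℝ 𝔽)}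
    (hA : ¬HasSingularLift A) {L L' : Matrix (Fin n) (Fin n) 𝔽⟦ℝ⟧}
    (hL : ∀ i j, IsLift (A i j) (L i j)) (hL' : ∀ i j, IsLift (A i j) (L' i j)) {i j : Fin n}
    (hoff : ∀ i' j', (i', j') ≠ (i, j) → L' i' j' = L i' j') :
    L'.det.orderTop = L.det.orderTop := by
  rw [Matrix.det_eq_add_mul_adjugate_of_forall_ne hoff]
  have hLij := hL i j
  have hL'ij := hL' i j
  cases hAij : A i j with
  | bot =>
    rw [hAij] at hLij hL'ij
    rw [show L' i j = 0 from hL'ij, show L i j = 0 from hLij, sub_self, zero_mul, add_zero]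
  | elt b ℓ =>
    rw [hAij] at hLij hL'ij
    by_contra hne
    refine hA (hasSingularLift_of_orderTop_det_le hL hAij
      (isLift_elt_zero_iff.1 (hLij.sub hL'ij)) (not_lt.1 fun hlt => hne ?_))
    exact orderTop_add_eq_left hlt

lemma orderTop_det_eq_of_isLift {n : ℕ} {A : Matrix (Fin n) (Fin n) (ELT ℝ 𝔽)}
    (hA : ¬HasSingularLift A) {L L' : Matrix (Fin n) (Fin n) 𝔽⟦ℝ⟧}
    (hL : ∀ i j, IsLift (A i j) (L i j)) (hL' : ∀ i j, IsLift (A i j) (L' i j)) :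
    L'.det.orderTop = L.det.orderTop := by
  classical
  let M (D : Finset (Fin n × Fin n)) : Matrix (Fin n) (Fin n) 𝔽⟦ℝ⟧ :=
    Matrix.of fun i j => if (i, j) ∈ D then L' i j else L i j
  have hM (D) : ∀ i j, IsLift (A i j) (M D i j) := fun i j => by
    by_cases h : (i, j) ∈ D <;> simp [M, h, hL, hL']
  have key (D) : (M D).det.orderTop = L.det.orderTop := by
    induction D using Finset.induction_on with
    | empty => rfl
    | insert p D _ ih =>
      obtain ⟨i₀, j₀⟩ := p
      refine (orderTop_det_eq_of_eq_off (i := i₀) (j := j₀) hA (hM D) (hM _)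
        fun i j hij => ?_).trans ih
      simp [M, hij]
  have := key Finset.univ
  simp only [M, Finset.mem_univ, if_true] at this
  exact this

lemma exists_perm_eq_elt_of_t_det_eq {n : ℕ} {A : Matrix (Fin n) (Fin n) (ELT ℝ 𝔽)} {r : ℝ}
    (hr : t (det A) = r) : ∃ (σ : Equiv.Perm (Fin n)) (b : Fin n → ℝ) (ℓ : Fin n → 𝔽),
      (∀ i, A i (σ i) = elt (b i) (ℓ i)) ∧ ∑ i, b i = r := by
  have hne : det A ≠ bot := fun h => by simp [h] at hr
  rw [det] at hr hne
  obtain ⟨x, hx, htx⟩ := exists_mem_t_sum_eq _ hne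
  obtain ⟨σ, -, rfl⟩ := List.mem_map.1 hx
  have hsum : ∑ i, t (A i (σ i)) = r := by
    rw [← hr, htx, t_mul, t_prod, List.map_ofFn, List.sum_ofFn]
    simp
  choose b hb using fun i => WithBot.ne_bot_iff_exists.1 fun h =>
    WithBot.coe_ne_bot (hsum ▸ WithBot.sum_eq_bot_iff.2 ⟨i, Finset.mem_univ _, h⟩)
  choose ℓ hℓ using fun i => eq_elt_of_t_eq (hb i).symm
  refine ⟨σ, b, ℓ, hℓ, WithBot.coe_inj.1 ?_⟩
  rw [WithBot.coe_sum, ← hsum]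
  simp [hb]

/-- `Y` perturbs the entries along `σ` by `t^(-b i + ε)`, of higher order than their lifts, and
`det Y = ± t^(-r + n ε)`. -/
lemma exists_isLift_coeff_det_ne_zero {n : ℕ} {A : Matrix (Fin n) (Fin n) (ELT ℝ 𝔽)} {r : ℝ}
    (hr : t (det A) = r) {ε : ℝ} (hε : 0 < ε) :
    ∃ L : Matrix (Fin n) (Fin n) 𝔽⟦ℝ⟧, (∀ i j, IsLift (A i j) (L i j)) ∧
      L.det.coeff (-r + n * ε) ≠ 0 := by
  obtain ⟨σ, b, ℓ, hσ, hb⟩ := exists_perm_eq_elt_of_t_det_eq hr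
  set H₀ : Matrix (Fin n) (Fin n) 𝔽⟦ℝ⟧ := Matrix.of fun i j => monomialLift (A i j)
  set Y : Matrix (Fin n) (Fin n) 𝔽⟦ℝ⟧ :=
    (Matrix.diagonal fun i => single (-b i + ε) (1 : 𝔽)).submatrix id σ.symm
  have hY : coeff.addMonoidHom (-r + n * ε) Y.det ≠ 0 := by
    have hexp : ∑ i, (-b i + ε) = -r + n * ε := by
      simp [Finset.sum_add_distrib, hb]
    rw [Matrix.det_permute', Matrix.det_diagonal, prod_single, hexp, Equiv.Perm.sign_symm,
      ← single_zero_intCast, single_mul_single, zero_add]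
    rcases Int.units_eq_one_or (Equiv.Perm.sign σ) with h | h <;> simp [h]
  obtain ⟨T, hT⟩ := Matrix.exists_finset_map_det_add_rows_ne_zero _ H₀ Y hY
  refine ⟨_, fun i j => ?_, hT⟩
  by_cases hi : i ∈ T
  · by_cases hj : j = σ i
    · subst hj
      have := (isLift_monomialLift (elt (b i) (ℓ i))).add_of_lt_orderTop
        (e := single (-b i + ε) (1 : 𝔽)) (lt_orderTop_single (by linarith))
      simpa [H₀, Y, hi, hσ i] using this
    · simpa [H₀, Y, hi, Matrix.diagonal_apply, Equiv.eq_symm_apply, Ne.symm hj] using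
        isLift_monomialLift (A i j)
  · simpa [H₀, hi] using isLift_monomialLift (A i j)

lemma hasSingularLift_of_s_det_eq_zero {n : ℕ} {A : Matrix (Fin n) (Fin n) (ELT ℝ 𝔽)}
    (h : s (det A) = 0) : HasSingularLift A := by
  by_contra hA
  set H₀ : Matrix (Fin n) (Fin n) 𝔽⟦ℝ⟧ := Matrix.of fun i j => monomialLift (A i j)
  have hH₀ : ∀ i j, IsLift (A i j) (H₀ i j) := fun i j => isLift_monomialLift _
  have hd₀ : H₀.det ≠ 0 := fun h₀ => hA ⟨H₀, hH₀, h₀⟩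
  have hdet := IsLift.det hH₀
  cases hA' : det A with
  | bot =>
    rw [hA'] at hdet
    exact hd₀ hdet
  | elt r μ =>
  rw [hA'] at h hdet
  obtain rfl : μ = 0 := h
  set d := H₀.det.order
  have hd : H₀.det.orderTop = d := (order_eq_orderTop_of_ne_zero hd₀).symm
  have hrd : -r < d := by
    have := isLift_elt_zero_iff.1 hdet
    rwa [hd, WithTop.coe_lt_coe] at this
  set ε := (d + r) / (n + 1)
  have hε : 0 < ε := div_pos (by linarith) (by positivity)
  have hnε : ((n : ℝ) + 1) * ε = d + r := mul_div_cancel₀ _ (by positivity)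
  obtain ⟨L, hL, hcoeff⟩ := exists_isLift_coeff_det_ne_zero (by rw [hA']; rfl) hε
  have hle := orderTop_le_of_coeff_ne_zero hcoeff
  rw [orderTop_det_eq_of_isLift hA hH₀ hL, hd, WithTop.coe_le_coe] at hle
  linarith

end ELT

theorem stmt7_general {𝔽 : Type} [Field 𝔽] {n : ℕ}
    (A : Matrix (Fin n) (Fin n) (ELT ℝ 𝔽)) :
    (ELT.LinDep (fun i j => A i j) ↔ ELT.s (ELT.det A) = 0) ∧
    (ELT.LinDep (fun j i => A i j) ↔ ELT.s (ELT.det A) = 0) := by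
  have hsing : ELT.s (ELT.det A) = 0 ↔ ELT.HasSingularLift A :=
    ⟨ELT.hasSingularLift_of_s_det_eq_zero, ELT.HasSingularLift.s_det_eq_zero⟩
  exact ⟨(ELT.linDep_iff_hasSingularLift A).trans hsing.symm,
    (ELT.linDep_iff_hasSingularLift A.transpose).trans
      (ELT.hasSingularLift_transpose_iff.trans hsing.symm)⟩

/-- The rows of `A` are linearly dependent iff the columns of `A` are linearly
dependent iff `A` is singular, i.e. `s(det A) = 0`. -/
theorem stmt7 {𝔽 : Type} [Field 𝔽] [IsAlgClosed 𝔽] {n : ℕ}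
    (A : Matrix (Fin n) (Fin n) (ELT ℝ 𝔽)) :
    (ELT.LinDep (fun i j => A i j) ↔ ELT.s (ELT.det A) = 0) ∧
    (ELT.LinDep (fun j i => A i j) ↔ ELT.s (ELT.det A) = 0) :=
  stmt7_general A
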